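/- Let $\mathcal{G}$ be a class, $R_\ell, R_\ell^\lambda, R_n^\lambda : \mathcal{G} \to \mathbb{R}$, $g^*$ a minimizer of $R_\ell$ over $\mathcal{G}$, $\hat{g}$ a minimizer of $R_n^\lambda$ over $\mathcal{G}$. Suppose there exist $a \ge 0$ and $0 < r < 1$ such that for all $g \in \mathcal{G}$: $(R_\ell(g) - R_\ell(g^*)) - (R_\ell^\lambda(g) - R_\ell^\lambda(g^*)) \le a + r(R_\ell(g) - R_\ell(g^*))$. Then $R_\ell(\hat{g}) - R_\ell(g^*) \le \frac{1}{1-r}\big( \sup_{g\in\mathcal{G}} |(R_n^\lambda - R_\ell^\lambda)(g) - (R_n^\lambda - R_\ell^\lambda)(g^*)| + a \big)$. -/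
import Mathlib

/-- Excess risk bound under an approximation function `a` with residual constant `r`
(Definition 3 of the paper). -/
theorem excess_risk_approx_bound {G : Type*} [Nonempty G]
    (Rl Rlam Rn : G → ℝ) (gstar ghat : G) (a r : ℝ)
    (hstar : ∀ g, Rl gstar ≤ Rl g)
    (hhat : ∀ g, Rn ghat ≤ Rn g)
    (ha : 0 ≤ a) (hr0 : 0 < r) (hr1 : r < 1)
    (happrox : ∀ g, (Rl g - Rl gstar) - (Rlam g - Rlam gstar) ≤
      a + r * (Rl g - Rl gstar))
    (hbdd : BddAbove (Set.range fun g => |(Rn g - Rlam g) - (Rn gstar - Rlam gstar)|)) :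
    Rl ghat - Rl gstar ≤
      (1 / (1 - r)) * ((⨆ g, |(Rn g - Rlam g) - (Rn gstar - Rlam gstar)|) + a) := by
  set S := ⨆ g, |(Rn g - Rlam g) - (Rn gstar - Rlam gstar)| with hS
  have hSle : |(Rn ghat - Rlam ghat) - (Rn gstar - Rlam gstar)| ≤ S :=
    le_ciSup hbdd ghat
  have h1 : Rlam ghat - Rlam gstar ≤ S := by
    have h2 : Rn ghat - Rn gstar ≤ 0 := by linarith [hhat gstar]
    have h3 : -((Rn ghat - Rlam ghat) - (Rn gstar - Rlam gstar)) ≤ S := by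
      calc _ ≤ |(Rn ghat - Rlam ghat) - (Rn gstar - Rlam gstar)| := neg_le_abs _
        _ ≤ S := hSle
    linarith
  have h4 := happrox ghat
  have h5 : (1 - r) * (Rl ghat - Rl gstar) ≤ S + a := by nlinarith
  rw [div_mul_eq_mul_div, one_mul, le_div_iff₀ (by linarith)]
  linarith
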